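/- Suppose 1/n ≪ c ≪ γ ≪ 1 (nested-quantifier reading). Let H be a 4-graph on n vertices and let {A,B} be a bipartition of V(H) with n/2 − cn ≤ |A| ≤ n/2 + cn. Then: (i) every γ-good vertex of H is contained in at least (1−γ)n γ-good pairs; (ii) every γ-good vertex of H is contained in at least (1−γ)·C(n,2) γ-good triples; (iii) every γ-good pair of H is contained in at least (1−γ)n γ-good triples. -/

import Mathlib

/-!
An even edge through a triple `S` is `S` plus one vertex, whose side of the bipartition is forced
by the parity of `|S ∩ A|`; so every triple has even codegree at most `max |A| |B| ≤ (1/2 + c) n`,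
and by double counting every pair has even codegree at most about `n² / 4`. Double counting also
gives `∑_{|T| = k, T ∩ S = ∅} deg (S ∪ T) = C(4 - |S|, k) deg S`; for a good vertex or pair this
sum is close to the maximum the bounds allow, so by averaging almost every extension `S ∪ T` has
nearly maximal degree, i.e. is good.
-/

open Finset

namespace HamiltonTwoCycles

/-- The number of edges of `E` containing the vertex set `S` (degree/codegree of `S`). -/
def deg {n : ℕ} (E : Finset (Finset (Fin n))) (S : Finset (Fin n)) : ℕ :=
  (E.filter fun e => S ⊆ e).card

/-- `E` is the edge set of a 4-uniform hypergraph on the vertex set `Fin n`. -/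
def Is4Graph {n : ℕ} (E : Finset (Finset (Fin n))) : Prop :=
  ∀ e ∈ E, e.card = 4

/-- The minimum codegree of the 4-graph `E` is at least the real number `x`. -/
def MinCodegGE {n : ℕ} (E : Finset (Finset (Fin n))) (x : ℝ) : Prop :=
  ∀ S : Finset (Fin n), S.card = 3 → x ≤ (deg E S : ℝ)

/-- The 4-graph `E` on `Fin n` contains a Hamilton 2-cycle: a cyclic ordering
`f 0, f 1, …, f (n-1)` of all vertices such that each of the `n/2` quadruples of four
cyclically consecutive vertices starting at an even position forms an edge. -/
def HamCycle2 (n : ℕ) (E : Finset (Finset (Fin n))) : Prop :=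
  Even n ∧ ∃ f : ZMod n → Fin n, Function.Bijective f ∧
    ∀ j : ℕ, j < n / 2 →
      ({f (2*j), f (2*j+1), f (2*j+2), f (2*j+3)} : Finset (Fin n)) ∈ E

/-- `f 0, f 1, …, f (2ℓ+1)` is a 2-path of length `ℓ` in the 4-graph `E`:
the vertices are distinct and each of the `ℓ` quadruples of consecutive vertices
starting at an even position forms an edge. -/
def IsPath2 (n : ℕ) (E : Finset (Finset (Fin n))) (ℓ : ℕ) (f : ℕ → Fin n) : Prop :=
  Set.InjOn f (Set.Iio (2*ℓ+2)) ∧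
  ∀ j : ℕ, j < ℓ →
    ({f (2*j), f (2*j+1), f (2*j+2), f (2*j+3)} : Finset (Fin n)) ∈ E

/-- The vertex set of the 2-path of length `ℓ` described by `f`. -/
def pathVerts (n ℓ : ℕ) (f : ℕ → Fin n) : Finset (Fin n) :=
  (Finset.range (2*ℓ+2)).image f

/-- The unordered pair of ends `{e₁, e₂}` equals the unordered pair `{q₁, q₂}`. -/
def EndsMatch {n : ℕ} (e₁ e₂ q₁ q₂ : Finset (Fin n)) : Prop :=
  (e₁ = q₁ ∧ e₂ = q₂) ∨ (e₁ = q₂ ∧ e₂ = q₁)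

/-- The 4-graph `E` contains a Hamilton 2-path whose ends are `p₁` and `p₂`. -/
def HamPath2Ends (n : ℕ) (E : Finset (Finset (Fin n))) (p₁ p₂ : Finset (Fin n)) : Prop :=
  ∃ (ℓ : ℕ) (f : ℕ → Fin n), IsPath2 n E ℓ f ∧ pathVerts n ℓ f = Finset.univ ∧
    EndsMatch {f 0, f 1} {f (2*ℓ), f (2*ℓ+1)} p₁ p₂

/-- The total 2-pathlength of the 4-graph `E` is at least `t`: there are vertex-disjoint
2-paths in `E` whose lengths sum to at least `t`. -/
def TotalPathlengthGE (n : ℕ) (E : Finset (Finset (Fin n))) (t : ℕ) : Prop :=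
  ∃ (k : ℕ) (ℓ : ℕ → ℕ) (f : ℕ → ℕ → Fin n),
    (∀ i < k, IsPath2 n E (ℓ i) (f i)) ∧
    (∀ i < k, ∀ j < k, i ≠ j →
      Disjoint (pathVerts n (ℓ i) (f i)) (pathVerts n (ℓ j) (f j))) ∧
    t ≤ ∑ i ∈ Finset.range k, ℓ i

/-- The odd edges of `E` with respect to the bipartition `{A, Aᶜ}`. -/
def oddEdges {n : ℕ} (E : Finset (Finset (Fin n))) (A : Finset (Fin n)) :
    Finset (Finset (Fin n)) :=
  E.filter fun e => Odd (e ∩ A).card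

/-- The even edges of `E` with respect to the bipartition `{A, Aᶜ}`. -/
def evenEdges {n : ℕ} (E : Finset (Finset (Fin n))) (A : Finset (Fin n)) :
    Finset (Finset (Fin n)) :=
  E.filter fun e => Even (e ∩ A).card

/-- `p` is a split pair with respect to the bipartition `{A, Aᶜ}`. -/
def SplitPair {n : ℕ} (A p : Finset (Fin n)) : Prop :=
  p.card = 2 ∧ (p ∩ A).card = 1

/-- `p` is a connate pair with respect to the bipartition `{A, Aᶜ}`. -/
def ConnatePair {n : ℕ} (A p : Finset (Fin n)) : Prop :=
  p.card = 2 ∧ (p ∩ A).card ≠ 1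

/-- The bipartition `{A, Aᶜ}` of the vertex set of the 4-graph `E` is even-good. -/
def EvenGood (n : ℕ) (E : Finset (Finset (Fin n))) (A : Finset (Fin n)) : Prop :=
  (Even A.card ∨ A.card = Aᶜ.card) ∨
  (∃ e ∈ oddEdges E A, ∃ e' ∈ oddEdges E A,
      e ∩ e' = ∅ ∨ SplitPair A (e ∩ e')) ∨
  (A.card = Aᶜ.card + 2 ∧ ∃ e ∈ oddEdges E A, ∃ e' ∈ oddEdges E A,
      (e ∩ e').card = 2 ∧ e ∩ e' ⊆ A) ∨
  (Aᶜ.card = A.card + 2 ∧ ∃ e ∈ oddEdges E A, ∃ e' ∈ oddEdges E A,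
      (e ∩ e').card = 2 ∧ e ∩ e' ⊆ Aᶜ)

/-- The bipartition `{A, Aᶜ}` of the vertex set of the 4-graph `E` is odd-good. -/
def OddGood (n : ℕ) (E : Finset (Finset (Fin n))) (A : Finset (Fin n)) : Prop :=
  ∃ m d : ℕ, (m = 0 ∨ m = 2 ∨ m = 4 ∨ m = 6) ∧ (d = 0 ∨ d = 2) ∧
    m % 8 = n % 8 ∧
    (d : ℤ) % 4 = ((A.card : ℤ) - (Aᶜ.card : ℤ)) % 4 ∧
    (((m = 0 ∧ d = 0) ∨ (m = 4 ∧ d = 2)) ∨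
     (((m = 2 ∧ d = 2) ∨ (m = 6 ∧ d = 0)) ∧ (evenEdges E A).Nonempty) ∨
     (((m = 4 ∧ d = 0) ∨ (m = 0 ∧ d = 2)) ∧ TotalPathlengthGE n (evenEdges E A) 2) ∨
     (((m = 6 ∧ d = 2) ∨ (m = 2 ∧ d = 0)) ∧
       ((∃ e ∈ evenEdges E A, (e ∩ A).card = 2 ∧ (e ∩ Aᶜ).card = 2) ∨
        TotalPathlengthGE n (evenEdges E A) 3)))

/-- The bipartition `{A, Aᶜ}` is `c`-even-extremal. -/
def EvenExtremalBip (n : ℕ) (E : Finset (Finset (Fin n))) (c : ℝ)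
    (A : Finset (Fin n)) : Prop :=
  (n : ℝ)/2 - c*n ≤ (A.card : ℝ) ∧ (A.card : ℝ) ≤ (n : ℝ)/2 + c*n ∧
  ((oddEdges E A).card : ℝ) ≤ c * (n.choose 4 : ℝ)

/-- The 4-graph `E` is `c`-even-extremal. -/
def EvenExtremal (n : ℕ) (E : Finset (Finset (Fin n))) (c : ℝ) : Prop :=
  ∃ A : Finset (Fin n), EvenExtremalBip n E c A

/-- The bipartition `{A, Aᶜ}` is `c`-odd-extremal. -/
def OddExtremalBip (n : ℕ) (E : Finset (Finset (Fin n))) (c : ℝ)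
    (A : Finset (Fin n)) : Prop :=
  (n : ℝ)/2 - c*n ≤ (A.card : ℝ) ∧ (A.card : ℝ) ≤ (n : ℝ)/2 + c*n ∧
  ((evenEdges E A).card : ℝ) ≤ c * (n.choose 4 : ℝ)

/-- The 4-graph `E` is `c`-odd-extremal. -/
def OddExtremal (n : ℕ) (E : Finset (Finset (Fin n))) (c : ℝ) : Prop :=
  ∃ A : Finset (Fin n), OddExtremalBip n E c A

/-- The number of (vertex-sequence) 2-paths of length `ℓ` in `E` whose ends are the
pairs `p₁` and `p₂`. -/
noncomputable def pathCount (n : ℕ) (E : Finset (Finset (Fin n))) (ℓ : ℕ)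
    (p₁ p₂ : Finset (Fin n)) : ℕ :=
  Nat.card {f : Fin (2*ℓ+2) → Fin n //
    IsPath2 n E ℓ (fun i => f ⟨i % (2*ℓ+2), Nat.mod_lt i (by omega)⟩) ∧
    EndsMatch {f ⟨0, by omega⟩, f ⟨1, by omega⟩}
      {f ⟨2*ℓ, by omega⟩, f ⟨2*ℓ+1, by omega⟩} p₁ p₂}

/-- The 4-graph `E` on `n` vertices is `κ`-connecting. -/
def Connecting (n : ℕ) (E : Finset (Finset (Fin n))) (κ : ℝ) : Prop :=
  ∀ p₁ p₂ : Finset (Fin n), p₁.card = 2 → p₂.card = 2 → Disjoint p₁ p₂ →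
    κ * (n : ℝ)^2 ≤ (pathCount n E 2 p₁ p₂ : ℝ) ∨
    κ * (n : ℝ)^4 ≤ (pathCount n E 3 p₁ p₂ : ℝ)

/-- The ordered octuple `O` is an absorbing structure for the pair `p` in the 4-graph `E`. -/
def AbsorbStruct (n : ℕ) (E : Finset (Finset (Fin n))) (p : Finset (Fin n))
    (O : Fin 8 → Fin n) : Prop :=
  Function.Injective O ∧
  (∃ f : ℕ → Fin n, IsPath2 n E 3 f ∧
      pathVerts n 3 f = Finset.univ.image O ∧
      EndsMatch {f 0, f 1} {f 6, f 7} {O 0, O 1} {O 6, O 7}) ∧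
  (∃ f : ℕ → Fin n, IsPath2 n E 4 f ∧
      pathVerts n 4 f = Finset.univ.image O ∪ p ∧
      EndsMatch {f 0, f 1} {f 8, f 9} {O 0, O 1} {O 6, O 7})

/-- The pair `p` is `β`-absorbable in the 4-graph `E`. -/
def Absorbable (n : ℕ) (E : Finset (Finset (Fin n))) (β : ℝ) (p : Finset (Fin n)) : Prop :=
  β * (n : ℝ)^8 ≤ (Nat.card {O : Fin 8 → Fin n // AbsorbStruct n E p O} : ℝ)

/-- The 4-graph `E` is `(α,β)`-absorbing. -/
def Absorbing (n : ℕ) (E : Finset (Finset (Fin n))) (α β : ℝ) : Prop :=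
  (Nat.card {p : Finset (Fin n) // p.card = 2 ∧ ¬ Absorbable n E β p} : ℝ) ≤ α * (n : ℝ)^2

/-- `g 0, …, g (m-1)` is a 2-cycle on `m` vertices in the 4-graph `E`. -/
def IsCycle2 (n : ℕ) (E : Finset (Finset (Fin n))) (m : ℕ) (g : ℕ → Fin n) : Prop :=
  4 ≤ m ∧ Even m ∧ Set.InjOn g (Set.Iio m) ∧
  ∀ j : ℕ, j < m / 2 →
    ({g ((2*j) % m), g ((2*j+1) % m), g ((2*j+2) % m), g ((2*j+3) % m)} :
      Finset (Fin n)) ∈ E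

/-- The vertex set of the 2-cycle on `m` vertices described by `g`. -/
def cycVerts (n m : ℕ) (g : ℕ → Fin n) : Finset (Fin n) :=
  (Finset.range m).image g

/-- The 2-path `f` (of length `ℓ`) is a segment of the 2-cycle `g` (on `m` vertices). -/
def IsSegment (n m : ℕ) (g : ℕ → Fin n) (ℓ : ℕ) (f : ℕ → Fin n) : Prop :=
  2*ℓ+2 ≤ m ∧ ∃ t : ℕ, Even t ∧ ∀ i < 2*ℓ+2, f i = g ((t + i) % m)

/-- The 2-graph `G` contains a perfect matching on the vertex set `S`. -/
def PerfectMatchingOn (n : ℕ) (G : Finset (Finset (Fin n))) (S : Finset (Fin n)) : Prop :=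
  ∃ M ⊆ G, (∀ p ∈ M, ∀ q ∈ M, p ≠ q → Disjoint p q) ∧ M.biUnion id = S

/-- `v` is a `β`-fine vertex of the 4-graph `E` on `n` vertices. -/
def FineVertex (n : ℕ) (E : Finset (Finset (Fin n))) (β : ℝ) (v : Fin n) : Prop :=
  (1 - β^3) * (n.choose 3 : ℝ) ≤ (deg E {v} : ℝ)

/-- `p` is a `β`-fine pair of the 4-graph `E` on `n` vertices. -/
def FinePair (n : ℕ) (E : Finset (Finset (Fin n))) (β : ℝ) (p : Finset (Fin n)) : Prop :=
  p.card = 2 ∧ (1 - β^2) * (n.choose 2 : ℝ) ≤ (deg E p : ℝ)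

/-- `S` is a `β`-fine triple of the 4-graph `E` on `n` vertices. -/
def FineTriple (n : ℕ) (E : Finset (Finset (Fin n))) (β : ℝ) (S : Finset (Fin n)) : Prop :=
  S.card = 3 ∧ (1 - β) * (n : ℝ) ≤ (deg E S : ℝ)

/-- `v` is a `γ`-good vertex with respect to the edge collection `F` (e.g. the even or
the odd edges of a 4-graph on `n` vertices). -/
def GoodVertexFor (n : ℕ) (F : Finset (Finset (Fin n))) (γ : ℝ) (v : Fin n) : Prop :=
  (1/2 - γ^5) * (n.choose 3 : ℝ) ≤ (deg F {v} : ℝ)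

/-- `p` is a `γ`-good pair with respect to the edge collection `F`. -/
def GoodPairFor (n : ℕ) (F : Finset (Finset (Fin n))) (γ : ℝ) (p : Finset (Fin n)) : Prop :=
  p.card = 2 ∧ (1/2 - γ^3) * (n.choose 2 : ℝ) ≤ (deg F p : ℝ)

/-- `S` is a `γ`-good triple with respect to the edge collection `F`. -/
def GoodTripleFor (n : ℕ) (F : Finset (Finset (Fin n))) (γ : ℝ) (S : Finset (Fin n)) : Prop :=
  S.card = 3 ∧ (1/2 - γ) * (n : ℝ) ≤ (deg F S : ℝ)

/-- `p` is a `β₂`-medium pair with respect to the edge collection `F`. -/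
def MediumPairFor (n : ℕ) (F : Finset (Finset (Fin n))) (β₂ : ℝ) (p : Finset (Fin n)) : Prop :=
  p.card = 2 ∧ β₂ * (n.choose 2 : ℝ) ≤ (deg F p : ℝ)

/-- `v` is a `(β₁,β₂)`-medium vertex w.r.t. the even edges of `(E, A)`:
it lies in at least `β₁ n` pairs that are `β₂`-medium (for the even edges). -/
def MediumVertexE (n : ℕ) (E : Finset (Finset (Fin n))) (A : Finset (Fin n))
    (β₁ β₂ : ℝ) (v : Fin n) : Prop :=
  β₁ * (n : ℝ) ≤
    (Nat.card {p : Finset (Fin n) // v ∈ p ∧ MediumPairFor n (evenEdges E A) β₂ p} : ℝ)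

/-- `v` is a `(β₁,β₂)`-medium vertex w.r.t. the odd edges of `(E, A)`:
at least `β₁ n` vertices of `A` and at least `β₁ n` vertices of `Aᶜ` form a
`β₂`-medium pair with `v` (for the odd edges). -/
def MediumVertexO (n : ℕ) (E : Finset (Finset (Fin n))) (A : Finset (Fin n))
    (β₁ β₂ : ℝ) (v : Fin n) : Prop :=
  β₁ * (n : ℝ) ≤
    (Nat.card {a : Fin n // a ∈ A ∧ MediumPairFor n (oddEdges E A) β₂ {v, a}} : ℝ) ∧
  β₁ * (n : ℝ) ≤
    (Nat.card {b : Fin n // b ∈ Aᶜ ∧ MediumPairFor n (oddEdges E A) β₂ {v, b}} : ℝ)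


end HamiltonTwoCycles

open HamiltonTwoCycles

namespace HamiltonTwoCycles

lemma cast_choose_three (a : ℕ) : (a.choose 3 : ℝ) = a * (a - 1) * (a - 2) / 6 := by
  rcases Nat.lt_or_ge a 2 with h | h
  · interval_cases a <;> simp [Nat.choose]
  · obtain ⟨m, rfl⟩ := Nat.exists_eq_add_of_le' h
    have h' : ((m + 2).choose 3 : ℝ) * 3 = (m + 2).choose 2 * m := by
      exact_mod_cast Nat.choose_succ_right_eq (m + 2) 2
    rw [Nat.cast_choose_two] at h'
    push_cast at h' ⊢
    linarith

lemma le_card_filter_le_of_sum {ι : Type*} (s : Finset ι) (f : ι → ℝ) {D t N : ℝ}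
    (hD : ∀ i ∈ s, f i ≤ D) (htD : t < D) (hN : N * (D - t) ≤ ∑ i ∈ s, f i - #s * t) :
    N ≤ #{i ∈ s | t ≤ f i} := by
  have hsum : ∑ i ∈ s, (f i - t) ≤ #{i ∈ s | t ≤ f i} * (D - t) := by
    calc ∑ i ∈ s, (f i - t) ≤ ∑ i ∈ s, if t ≤ f i then D - t else 0 := by
          gcongr with i hi
          split_ifs with h
          · linarith [hD i hi]
          · linarith [not_le.mp h]
      _ = #{i ∈ s | t ≤ f i} * (D - t) := by rw [← sum_filter, sum_const, nsmul_eq_mul]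
  rw [sum_sub_distrib, sum_const, nsmul_eq_mul] at hsum
  exact le_of_mul_le_mul_right (hN.trans hsum) (sub_pos.mpr htD)

variable {n r : ℕ} {F : Finset (Finset (Fin n))}

lemma sum_deg_union_powersetCard (hF : ∀ e ∈ F, #e = r) (S : Finset (Fin n)) (k : ℕ) :
    ∑ T ∈ powersetCard k Sᶜ, deg F (S ∪ T) = (r - #S).choose k * deg F S := by
  have hcount : ∀ e ∈ F, #{T ∈ powersetCard k Sᶜ | S ∪ T ⊆ e} =
      if S ⊆ e then (r - #S).choose k else 0 := by
    intro e he
    split_ifs with hSe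
    · have : {T ∈ powersetCard k Sᶜ | S ∪ T ⊆ e} = powersetCard k (e \ S) := by
        ext T
        simp only [mem_filter, mem_powersetCard, union_subset_iff, hSe, true_and,
          subset_sdiff, subset_compl_iff_disjoint_left, disjoint_comm (a := S)]
        tauto
      rw [this, card_powersetCard, card_sdiff_of_subset hSe, hF e he]
    · rw [card_eq_zero, filter_eq_empty_iff]
      exact fun T _ h => hSe (subset_union_left.trans h)
  unfold deg
  have := sum_card_bipartiteAbove_eq_sum_card_bipartiteBelow (s := powersetCard k Sᶜ) (t := F)
    (r := fun T e => S ∪ T ⊆ e)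
  simp only [bipartiteAbove, bipartiteBelow] at this
  rw [this, sum_congr rfl hcount, ← sum_filter, sum_const, smul_eq_mul, mul_comm]

lemma disjoint_of_mem_powersetCard_compl {S T : Finset (Fin n)} {k : ℕ}
    (hT : T ∈ powersetCard k Sᶜ) : Disjoint S T :=
  subset_compl_iff_disjoint_left.mp (mem_powersetCard.mp hT).1

lemma card_union_of_mem_powersetCard_compl {S T : Finset (Fin n)} {k : ℕ}
    (hT : T ∈ powersetCard k Sᶜ) : #(S ∪ T) = #S + k := by
  rw [card_union_of_disjoint (disjoint_of_mem_powersetCard_compl hT),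
    (mem_powersetCard.mp hT).2]

lemma cast_sum_deg_union_powersetCard (hF : ∀ e ∈ F, #e = r) (S : Finset (Fin n)) (k : ℕ) :
    ∑ T ∈ powersetCard k Sᶜ, (deg F (S ∪ T) : ℝ) = (r - #S).choose k * deg F S := by
  exact_mod_cast sum_deg_union_powersetCard hF S k

lemma choose_mul_deg_le (hF : ∀ e ∈ F, #e = r) (S : Finset (Fin n)) (k : ℕ) {D : ℝ}
    (hD : ∀ U : Finset (Fin n), #U = #S + k → deg F U ≤ D) :
    ((r - #S).choose k : ℝ) * deg F S ≤ (n - #S).choose k * D := by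
  have hle := sum_le_card_nsmul (powersetCard k Sᶜ) (fun T => (deg F (S ∪ T) : ℝ)) D
    fun T hT => hD _ (card_union_of_mem_powersetCard_compl hT)
  rwa [card_powersetCard, card_compl, Fintype.card_fin, nsmul_eq_mul,
    cast_sum_deg_union_powersetCard hF] at hle

lemma le_natCard_of_deg_supersets (hF : ∀ e ∈ F, #e = r) (S : Finset (Fin n)) (k : ℕ)
    {P : Finset (Fin n) → Prop} {D t N : ℝ}
    (hD : ∀ U : Finset (Fin n), #U = #S + k → deg F U ≤ D) (htD : t < D)
    (hP : ∀ U, S ⊆ U → #U = #S + k → t ≤ deg F U → P U)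
    (hN : N * (D - t) ≤ (r - #S).choose k * deg F S - (n - #S).choose k * t) :
    N ≤ Nat.card {U // P U} := by
  classical
  have hN' := le_card_filter_le_of_sum (powersetCard k Sᶜ) (fun T => (deg F (S ∪ T) : ℝ))
    (fun T hT => hD _ (card_union_of_mem_powersetCard_compl hT)) htD (N := N) (by
      rwa [card_powersetCard, card_compl, Fintype.card_fin, cast_sum_deg_union_powersetCard hF])
  refine hN'.trans ?_
  rw [Nat.card_eq_fintype_card, Fintype.card_subtype]
  refine Nat.cast_le.mpr
    (card_le_card_of_injOn (S ∪ ·) (fun T hT => ?_) fun T₁ hT₁ T₂ hT₂ h => ?_)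
  · obtain ⟨hT, ht⟩ := mem_filter.mp hT
    exact mem_filter.mpr ⟨mem_univ _, hP _ subset_union_left
      (card_union_of_mem_powersetCard_compl hT) ht⟩
  · rw [← union_sdiff_cancel_left (disjoint_of_mem_powersetCard_compl (mem_filter.mp hT₁).1),
      ← union_sdiff_cancel_left (disjoint_of_mem_powersetCard_compl (mem_filter.mp hT₂).1)]
    exact congrArg (· \ S) h

lemma deg_pair_le_of_deg_triple_le (hF : ∀ e ∈ F, #e = 4) (hn : 2 ≤ n) {D : ℝ}
    (hD : ∀ S, #S = 3 → deg F S ≤ D) {p : Finset (Fin n)} (hp : #p = 2) :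
    deg F p ≤ (n - 2) * D / 2 := by
  have := choose_mul_deg_le hF p 1 fun U hU => hD U (by rw [hU, hp])
  rw [hp, Nat.choose_one_right, Nat.choose_one_right, Nat.cast_sub hn] at this
  push_cast at this
  linarith

lemma deg_evenEdges_le_max {E : Finset (Finset (Fin n))} (hE : Is4Graph E) (A : Finset (Fin n))
    {S : Finset (Fin n)} (hS : #S = 3) : deg (evenEdges E A) S ≤ max #A #Aᶜ := by
  set B := if Even #(S ∩ A) then Aᶜ else A
  have hmaps : ∀ e ∈ (evenEdges E A).filter (S ⊆ ·), e \ S ∈ B.powersetCard 1 := by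
    intro e he
    obtain ⟨⟨heE, heven⟩, hSe⟩ := And.imp_left mem_filter.mp (mem_filter.mp he)
    obtain ⟨u, hu⟩ := card_eq_one.mp (by rw [card_sdiff_of_subset hSe, hE e heE, hS] :
      #(e \ S) = 1)
    have huS : u ∉ S := (mem_sdiff.mp (hu ▸ mem_singleton_self u)).2
    rw [← union_sdiff_of_subset hSe, hu, union_comm, ← insert_eq] at heven
    rw [hu, mem_powersetCard, singleton_subset_iff, card_singleton]
    refine ⟨?_, rfl⟩
    by_cases huA : u ∈ A
    · rw [insert_inter_of_mem huA, card_insert_of_notMem fun h => huS (mem_inter.mp h).1,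
        Nat.even_add_one] at heven
      simp [B, heven, huA]
    · rw [insert_inter_of_notMem huA] at heven
      simp [B, heven, huA]
  have hinj : Set.InjOn (· \ S) ((evenEdges E A).filter (S ⊆ ·) : Set (Finset (Fin n))) := by
    intro e₁ he₁ e₂ he₂ h
    rw [← sdiff_union_of_subset (mem_filter.mp he₁).2,
      ← sdiff_union_of_subset (mem_filter.mp he₂).2]
    exact congrArg (· ∪ S) h
  calc deg (evenEdges E A) S ≤ #(B.powersetCard 1) := card_le_card_of_injOn _ hmaps hinj
    _ = #B := by rw [card_powersetCard, Nat.choose_one_right]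
    _ ≤ max #A #Aᶜ := by unfold B; split_ifs <;> simp

section GoodCounts

variable {γ : ℝ}

lemma two_le_of_one_le_pow_five_mul (hγ : 0 < γ) (hγ₁ : γ ≤ 1 / 100)
    (hn : 1 ≤ γ ^ 5 * n) : 2 ≤ n := by
  have : (2 : ℝ) ≤ n := by nlinarith [pow_le_pow_left₀ hγ.le hγ₁ 5]
  exact_mod_cast this

lemma le_card_goodPairs_of_goodVertex (hF : ∀ e ∈ F, #e = 4) (hγ : 0 < γ)
    (hγ₁ : γ ≤ 1 / 100) (hn : 1 ≤ γ ^ 5 * n)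
    (hcodeg : ∀ S, #S = 3 → deg F S ≤ (1 / 2 + γ ^ 5) * n)
    {v : Fin n} (hv : GoodVertexFor n F γ v) :
    (1 - γ) * n ≤ Nat.card {p : Finset (Fin n) // v ∈ p ∧ GoodPairFor n F γ p} := by
  have hn₂ := two_le_of_one_le_pow_five_mul hγ hγ₁ hn
  have hx0 : (0 : ℝ) ≤ n := by positivity
  have hγx : 2 ≤ γ ^ 3 * (n : ℝ) := by nlinarith [pow_pos hγ 2, pow_pos hγ 3, pow_pos hγ 4]
  -- the hypothesis `hN` of `le_natCard_of_deg_supersets` below, divided by `n / 2`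
  have key : (1 - γ) * n * ((n - 2) * (1 / 2 + γ ^ 5) - (n - 1) * (1 / 2 - γ ^ 3)) ≤
      (n - 1) * ((1 / 2 - γ ^ 5) * (n - 2) - (1 / 2 - γ ^ 3) * (n - 1)) := by
    have hx2 : (0 : ℝ) ≤ n ^ 2 := sq_nonneg _
    have h5 : γ ^ 5 * n ^ 2 ≤ γ ^ 4 * n ^ 2 / 4 := by
      nlinarith [mul_nonneg (pow_pos hγ 4).le hx2]
    have h34 : γ ^ 3 * n + γ ^ 4 * n ≤ γ * n / 2 := by
      have : γ ^ 2 + γ ^ 3 ≤ 1 / 2 := by nlinarith [pow_pos hγ 2, pow_pos hγ 3]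
      nlinarith [mul_nonneg hγ.le hx0]
    nlinarith [mul_nonneg (mul_nonneg (pow_pos hγ 5).le hγ.le) hx2,
      mul_le_mul_of_nonneg_left hγx (mul_nonneg hγ.le hx0), pow_pos hγ 5, pow_pos hγ 3,
      mul_nonneg (pow_pos hγ 5).le hx0]
  refine le_natCard_of_deg_supersets hF {v} 1
    (fun U hU => deg_pair_le_of_deg_triple_le hF hn₂ hcodeg (by rw [hU, card_singleton]))
    (t := (1 / 2 - γ ^ 3) * n.choose 2) ?_
    (fun U hvU hU ht => ⟨singleton_subset_iff.mp hvU, hU, ht⟩) ?_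
  · have : 0 < (n : ℝ) * (n * (γ ^ 5 + γ ^ 3) - 1 / 2 - 2 * γ ^ 5 - γ ^ 3) := by
      have : γ ^ 5 ≤ 1 / 8 := by nlinarith [pow_le_pow_left₀ hγ.le hγ₁ 5]
      have : γ ^ 3 ≤ 1 / 8 := by nlinarith [pow_le_pow_left₀ hγ.le hγ₁ 3]
      have : (2 : ℝ) ≤ n := by exact_mod_cast hn₂
      exact mul_pos (by linarith) (by nlinarith [mul_nonneg (pow_pos hγ 5).le hx0])
    rw [Nat.cast_choose_two]
    nlinarith
  · unfold GoodVertexFor at hv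
    rw [card_singleton, Nat.choose_one_right, Nat.choose_one_right, Nat.cast_choose_two,
      Nat.cast_sub (by omega : 1 ≤ n)]
    norm_num
    rw [cast_choose_three] at hv
    nlinarith [mul_le_mul_of_nonneg_left key hx0]

lemma le_card_goodTriples_of_goodVertex (hF : ∀ e ∈ F, #e = 4) (hγ : 0 < γ)
    (hγ₁ : γ ≤ 1 / 100) (hn : 1 ≤ γ ^ 5 * n)
    (hcodeg : ∀ S, #S = 3 → deg F S ≤ (1 / 2 + γ ^ 5) * n)
    {v : Fin n} (hv : GoodVertexFor n F γ v) :
    (1 - γ) * n.choose 2 ≤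
      Nat.card {S : Finset (Fin n) // v ∈ S ∧ GoodTripleFor n F γ S} := by
  have hn₂ := two_le_of_one_le_pow_five_mul hγ hγ₁ hn
  have hx0 : (0 : ℝ) ≤ n := by positivity
  have hγx : 4 ≤ γ * (n : ℝ) := by nlinarith [pow_pos hγ 2, pow_pos hγ 3, pow_pos hγ 4]
  have key : (1 - γ) * (γ ^ 5 + γ) * (n : ℝ) ≤ ((n : ℝ) - 2) * (γ - γ ^ 5) := by
    have : γ ^ 5 * (n : ℝ) ≤ γ ^ 2 * (n : ℝ) / 4 := by
      have : γ ^ 3 ≤ 1 / 4 := by nlinarith [pow_pos hγ 2, pow_pos hγ 3]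
      nlinarith [mul_nonneg (pow_pos hγ 2).le hx0]
    nlinarith [mul_nonneg (mul_nonneg (pow_pos hγ 5).le hγ.le) hx0,
      mul_le_mul_of_nonneg_left hγx hγ.le, pow_pos hγ 5]
  refine le_natCard_of_deg_supersets hF {v} 2 hcodeg (t := (1 / 2 - γ) * n)
    (by nlinarith [pow_pos hγ 5]) (fun U hvU hU ht => ⟨singleton_subset_iff.mp hvU, hU, ht⟩) ?_
  unfold GoodVertexFor at hv
  rw [cast_choose_three] at hv
  norm_num [Nat.cast_choose_two, Nat.cast_sub (by omega : 1 ≤ n)]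
  have hx1 : (0 : ℝ) ≤ n * (n - 1) / 2 := by
    have : (2 : ℝ) ≤ n := by exact_mod_cast hn₂
    exact div_nonneg (mul_nonneg hx0 (by linarith)) zero_le_two
  nlinarith [mul_le_mul_of_nonneg_left key hx1]

lemma le_card_goodTriples_of_goodPair (hF : ∀ e ∈ F, #e = 4) (hγ : 0 < γ)
    (hγ₁ : γ ≤ 1 / 100) (hn : 1 ≤ γ ^ 5 * n)
    (hcodeg : ∀ S, #S = 3 → deg F S ≤ (1 / 2 + γ ^ 5) * n)
    {p : Finset (Fin n)} (hp : GoodPairFor n F γ p) :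
    (1 - γ) * n ≤ Nat.card {S : Finset (Fin n) // p ⊆ S ∧ GoodTripleFor n F γ S} := by
  obtain ⟨hp₂, hdeg⟩ := hp
  have hn₂ := two_le_of_one_le_pow_five_mul hγ hγ₁ hn
  have hx0 : (0 : ℝ) ≤ n := by positivity
  have key : (1 - γ) * (γ ^ 5 + γ) * (n : ℝ) ≤
      (1 / 2 - γ ^ 3) * ((n : ℝ) - 1) - ((n : ℝ) - 2) * (1 / 2 - γ) := by
    have : γ ^ 5 ≤ γ ^ 2 - γ ^ 3 := by nlinarith [pow_pos hγ 2, pow_pos hγ 3, pow_pos hγ 4]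
    nlinarith [mul_le_mul_of_nonneg_right this hx0]
  refine le_natCard_of_deg_supersets hF p 1 (fun U hU => hcodeg U (by rw [hU, hp₂]))
    (t := (1 / 2 - γ) * n) (by nlinarith [pow_pos hγ 5])
    (fun U hpU hU ht => ⟨hpU, by rw [hU, hp₂], ht⟩) ?_
  rw [hp₂, Nat.choose_one_right, Nat.choose_one_right, Nat.cast_sub hn₂]
  rw [Nat.cast_choose_two] at hdeg
  push_cast
  nlinarith [mul_le_mul_of_nonneg_left key hx0]

end GoodCounts

end HamiltonTwoCycles

/-- **Proposition 5.6.** Properties of `γ`-good vertices, pairs and triples (with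
respect to the even edges of a bipartition `{A, Aᶜ}` with `n/2 - cn ≤ |A| ≤ n/2 + cn`),
where `1/n ≪ c ≪ γ ≪ 1`. -/
theorem statement14 :
    ∃ γ₀ : ℝ, 0 < γ₀ ∧ ∀ γ : ℝ, 0 < γ → γ ≤ γ₀ →
    ∃ c₀ : ℝ, 0 < c₀ ∧ ∀ c : ℝ, 0 < c → c ≤ c₀ →
    ∃ n₀ : ℕ, ∀ n : ℕ, n₀ ≤ n →
    ∀ E : Finset (Finset (Fin n)), Is4Graph E →
    ∀ A : Finset (Fin n),
      (n : ℝ)/2 - c * n ≤ (A.card : ℝ) → (A.card : ℝ) ≤ (n : ℝ)/2 + c * n →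
      ((∀ v : Fin n, GoodVertexFor n (evenEdges E A) γ v →
          (1 - γ) * (n : ℝ) ≤
            (Nat.card {p : Finset (Fin n) //
                v ∈ p ∧ GoodPairFor n (evenEdges E A) γ p} : ℝ)) ∧
       (∀ v : Fin n, GoodVertexFor n (evenEdges E A) γ v →
          (1 - γ) * (n.choose 2 : ℝ) ≤
            (Nat.card {S : Finset (Fin n) //
                v ∈ S ∧ GoodTripleFor n (evenEdges E A) γ S} : ℝ)) ∧
       (∀ p : Finset (Fin n), GoodPairFor n (evenEdges E A) γ p →
          (1 - γ) * (n : ℝ) ≤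
            (Nat.card {S : Finset (Fin n) //
                p ⊆ S ∧ GoodTripleFor n (evenEdges E A) γ S} : ℝ))) := by
  refine ⟨1 / 100, by norm_num, fun γ hγ hγ₁ => ⟨γ ^ 5, by positivity, fun c hc hcγ =>
    ⟨⌈1 / c⌉₊, fun n hn E hE A hA₁ hA₂ => ?_⟩⟩⟩
  have hcn : 1 ≤ c * n := by
    have := (Nat.le_ceil (1 / c)).trans (Nat.cast_le.mpr hn : (⌈1 / c⌉₊ : ℝ) ≤ n)
    rwa [div_le_iff₀ hc, mul_comm] at this
  have hγn : 1 ≤ γ ^ 5 * n := hcn.trans (mul_le_mul_of_nonneg_right hcγ n.cast_nonneg)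
  have hF : ∀ e ∈ evenEdges E A, #e = 4 := fun e he => hE e (mem_filter.mp he).1
  have hcodeg : ∀ S, #S = 3 → deg (evenEdges E A) S ≤ (1 / 2 + γ ^ 5) * n := by
    intro S hS
    have hAc : (#Aᶜ + #A : ℝ) = n := by
      exact_mod_cast (card_compl_add_card A).trans (Fintype.card_fin n)
    calc (deg (evenEdges E A) S : ℝ) ≤ max #A #Aᶜ := by
          exact_mod_cast deg_evenEdges_le_max hE A hS
      _ ≤ (1 / 2 + c) * n := by rw [Nat.cast_max]; exact max_le (by linarith) (by linarith)
      _ ≤ (1 / 2 + γ ^ 5) * n := by gcongr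
  exact ⟨fun v => le_card_goodPairs_of_goodVertex hF hγ hγ₁ hγn hcodeg,
    fun v => le_card_goodTriples_of_goodVertex hF hγ hγ₁ hγn hcodeg,
    fun p => le_card_goodTriples_of_goodPair hF hγ hγ₁ hγn hcodeg⟩
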